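/- Let x and y be nonempty strings over an alphabet Σ, and let M be a best possible match between x and y (a match of maximal cardinality). Suppose x = x₁x₂⋯xₙ and y = y₁y₂⋯yₙ are decompositions of x and y into consecutive (possibly empty) substrings that correspond under M, meaning that for every pair in M, the x-index lies in the segment xᵢ if and only if the y-index lies in the segment yᵢ. Then f̄(x,y) = Σᵢ₌₁ⁿ f̄(xᵢ,yᵢ)·vᵢ, where vᵢ = (|xᵢ| + |yᵢ|)/(|x| + |y|) and where for segments with |xᵢ| + |yᵢ| > 0 the quantity f̄(xᵢ,yᵢ) is given by the defining formula of the f̄-distance (and terms with |xᵢ| + |yᵢ| = 0 are omitted). -/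

import Mathlib

/-- A match between two strings `a` and `b`: a finite set of pairs of (0-based) indices,
strictly increasing in both coordinates simultaneously, matching equal symbols. -/
def IsMatch {α : Type*} (a b : List α) (M : Finset (ℕ × ℕ)) : Prop :=
  (∀ p ∈ M, p.1 < a.length ∧ p.2 < b.length ∧ a[p.1]? = b[p.2]?) ∧
  (∀ p ∈ M, ∀ q ∈ M, (p.1 < q.1 ↔ p.2 < q.2))

/-- The maximal cardinality of a match between `a` and `b`. -/
noncomputable def maxMatch {α : Type*} (a b : List α) : ℕ :=
  sSup {r : ℕ | ∃ M : Finset (ℕ × ℕ), IsMatch a b M ∧ M.card = r}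

/-- The `f̄` distance between two strings:
`f̄(a,b) = 1 - 2 · max{|M| : M a match between a and b} / (|a| + |b|)`. -/
noncomputable def fbar {α : Type*} (a b : List α) : ℝ :=
  1 - 2 * (maxMatch a b : ℝ) / ((a.length : ℝ) + (b.length : ℝ))

/-!
A match that respects a block decomposition splits into matches of corresponding blocks, and
conversely optimal matches of the blocks, shifted into place, glue to a match of the whole
strings. Hence a best match respecting the decomposition has exactly `∑ᵢ maxMatch xᵢ yᵢ` pairs.
The identity then follows by summing `f̄(a,b)·(|a|+|b|) = |a| + |b| - 2·maxMatch a b`, which is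
linear in the data and also holds for `|a| + |b| = 0`.
-/

open Finset

section

variable {α : Type*}

theorem isMatch_empty (a b : List α) : IsMatch a b ∅ := by
  constructor <;> simp

theorem IsMatch.card_le_length_left {a b : List α} {M : Finset (ℕ × ℕ)} (h : IsMatch a b M) :
    M.card ≤ a.length := by
  have hinj : Set.InjOn Prod.fst (M : Set (ℕ × ℕ)) := fun p hp q hq hpq => by
    have := h.2 p hp q hq
    have := h.2 q hq p hp
    exact Prod.ext hpq (by omega)
  simpa using card_le_card_of_injOn Prod.fst (fun p hp => mem_range.2 (h.1 p hp).1) hinj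

theorem bddAbove_setOf_isMatch_card (a b : List α) :
    BddAbove {r : ℕ | ∃ M : Finset (ℕ × ℕ), IsMatch a b M ∧ M.card = r} :=
  ⟨a.length, fun _ ⟨_, hM, hr⟩ => hr ▸ hM.card_le_length_left⟩

theorem IsMatch.card_le_maxMatch {a b : List α} {M : Finset (ℕ × ℕ)} (h : IsMatch a b M) :
    M.card ≤ maxMatch a b :=
  le_csSup (bddAbove_setOf_isMatch_card a b) ⟨M, h, rfl⟩

theorem exists_isMatch_card_eq_maxMatch (a b : List α) :
    ∃ M : Finset (ℕ × ℕ), IsMatch a b M ∧ M.card = maxMatch a b :=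
  Nat.sSup_mem ⟨0, Set.mem_ofPred.2 ⟨∅, isMatch_empty a b, rfl⟩⟩
    (bddAbove_setOf_isMatch_card a b)

theorem maxMatch_le_length_left (a b : List α) : maxMatch a b ≤ a.length := by
  obtain ⟨M, hM, hcard⟩ := exists_isMatch_card_eq_maxMatch a b
  exact hcard ▸ hM.card_le_length_left

theorem IsMatch.maxMatch_eq_card {a b : List α} {M : Finset (ℕ × ℕ)} (hM : IsMatch a b M)
    (hbest : ∀ M' : Finset (ℕ × ℕ), IsMatch a b M' → M'.card ≤ M.card) :
    maxMatch a b = M.card := by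
  obtain ⟨M', hM', hcard⟩ := exists_isMatch_card_eq_maxMatch a b
  exact le_antisymm (hcard ▸ hbest M' hM') hM.card_le_maxMatch

theorem fbar_mul_length_add (a b : List α) :
    fbar a b * (a.length + b.length) = a.length + b.length - 2 * maxMatch a b := by
  rcases eq_or_ne ((a.length : ℝ) + b.length) 0 with h | h
  · have : a.length + b.length = 0 := by exact_mod_cast h
    have := maxMatch_le_length_left a b
    rw [h, show maxMatch a b = 0 by omega]
    simp
  · rw [fbar]
    field_simp

namespace List

def blockStart (xs : List (List α)) (k : ℕ) : ℕ := (xs.take k).flatten.length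

def blockRange (xs : List (List α)) (k : ℕ) : Finset ℕ :=
  Finset.Ico (xs.blockStart k) (xs.blockStart (k + 1))

variable {xs : List (List α)}

theorem blockStart_succ (xs : List (List α)) (k : ℕ) :
    xs.blockStart (k + 1) = xs.blockStart k + (xs.getD k []).length := by
  rw [blockStart, blockStart, take_add_one, flatten_append, length_append, getD_eq_getElem?_getD]
  cases xs[k]? <;> simp

theorem blockStart_mono (xs : List (List α)) : Monotone xs.blockStart :=
  monotone_nat_of_le_succ fun k => by rw [blockStart_succ]; omega

theorem length_flatten_eq_sum_range (xs : List (List α)) :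
    xs.flatten.length = ∑ k ∈ Finset.range xs.length, (xs.getD k []).length := by
  suffices ∀ n, xs.blockStart n = ∑ k ∈ Finset.range n, (xs.getD k []).length by
    rw [← this, blockStart, take_length]
  intro n
  induction n with
  | zero => simp [blockStart]
  | succ n ih => rw [Finset.sum_range_succ, ← ih, blockStart_succ]

theorem mem_blockRange {j k : ℕ} :
    j ∈ xs.blockRange k ↔ xs.blockStart k ≤ j ∧ j < xs.blockStart k + (xs.getD k []).length := by
  rw [blockRange, Finset.mem_Ico, blockStart_succ]

theorem blockStart_le_length_flatten (xs : List (List α)) (k : ℕ) :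
    xs.blockStart k ≤ xs.flatten.length := by
  calc xs.blockStart k ≤ xs.blockStart (k + xs.length) := xs.blockStart_mono (by omega)
    _ = xs.flatten.length := by rw [blockStart, take_of_length_le (by omega)]

theorem lt_length_flatten_of_mem_blockRange {j k : ℕ} (hj : j ∈ xs.blockRange k) :
    j < xs.flatten.length :=
  (Finset.mem_Ico.1 hj).2.trans_le (xs.blockStart_le_length_flatten _)

theorem lt_of_mem_blockRange_of_lt {i j k l : ℕ} (hkl : k < l) (hi : i ∈ xs.blockRange k)
    (hj : j ∈ xs.blockRange l) : i < j := by
  have := xs.blockStart_mono (show k + 1 ≤ l from hkl)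
  simp only [blockRange, Finset.mem_Ico] at hi hj
  omega

theorem disjoint_blockRange {k l : ℕ} (hkl : k ≠ l) :
    _root_.Disjoint (xs.blockRange k) (xs.blockRange l) := by
  refine Finset.disjoint_left.2 fun j hk hl => ?_
  rcases hkl.lt_or_gt with h | h
  · exact (lt_of_mem_blockRange_of_lt h hk hl).false
  · exact (lt_of_mem_blockRange_of_lt h hl hk).false

theorem exists_mem_blockRange {j : ℕ} (hj : j < xs.flatten.length) :
    ∃ k < xs.length, j ∈ xs.blockRange k := by
  suffices ∀ n, j < xs.blockStart n → ∃ k < n, j ∈ xs.blockRange k by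
    exact this _ (by rwa [blockStart, take_length])
  intro n hn
  induction n with
  | zero => simp [blockStart] at hn
  | succ n ih =>
    by_cases h : j < xs.blockStart n
    · obtain ⟨k, hk, hj⟩ := ih h
      exact ⟨k, by omega, hj⟩
    · exact ⟨n, by omega, Finset.mem_Ico.2 ⟨by omega, hn⟩⟩

theorem getElem?_flatten_blockStart_add {k i : ℕ} (hi : i < (xs.getD k []).length) :
    xs.flatten[xs.blockStart k + i]? = (xs.getD k [])[i]? := by
  have hk : k < xs.length := by
    by_contra h
    simp [getD_eq_getElem?_getD, getElem?_eq_none (not_lt.1 h)] at hi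
  have hsplit :
      xs.flatten = (xs.take k).flatten ++ (xs.getD k [] ++ (xs.drop (k + 1)).flatten) := by
    conv_lhs => rw [← take_append_drop (k + 1) xs]
    rw [take_add_one, getElem?_eq_getElem hk, getD_eq_getElem?_getD, getElem?_eq_getElem hk]
    simp only [flatten_append, Option.toList_some, flatten_cons, flatten_nil, append_nil,
      Option.getD_some, append_assoc]
  rw [hsplit, blockStart, getElem?_append_right (by omega), Nat.add_sub_cancel_left,
    getElem?_append_left hi]

end List

variable {xs ys : List (List α)} {M : Finset (ℕ × ℕ)}

theorem IsMatch.card_filter_blockRange_le (hM : IsMatch xs.flatten ys.flatten M) {k : ℕ}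
    (hcorr : ∀ p ∈ M, p.1 ∈ xs.blockRange k → p.2 ∈ ys.blockRange k) :
    (M.filter fun p => p.1 ∈ xs.blockRange k).card ≤ maxMatch (xs.getD k []) (ys.getD k []) := by
  set Mk := M.filter fun p => p.1 ∈ xs.blockRange k
  have hmem : ∀ p ∈ Mk, p ∈ M ∧ p.1 ∈ xs.blockRange k ∧ p.2 ∈ ys.blockRange k := fun p hp => by
    obtain ⟨hpM, hp1⟩ := mem_filter.1 hp
    exact ⟨hpM, hp1, hcorr p hpM hp1⟩
  let unshift : ℕ × ℕ → ℕ × ℕ := fun p => (p.1 - xs.blockStart k, p.2 - ys.blockStart k)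
  have hinj : Set.InjOn unshift Mk := fun p hp q hq hpq => by
    obtain ⟨-, hp1, hp2⟩ := hmem p hp
    obtain ⟨-, hq1, hq2⟩ := hmem q hq
    simp only [List.mem_blockRange, unshift, Prod.ext_iff] at hp1 hp2 hq1 hq2 hpq
    exact Prod.ext (by omega) (by omega)
  have hmatch : IsMatch (xs.getD k []) (ys.getD k []) (Mk.image unshift) := by
    constructor
    · simp only [mem_image, forall_exists_index, and_imp]
      rintro _ p hp rfl
      obtain ⟨hpM, hp1, hp2⟩ := hmem p hp
      rw [List.mem_blockRange] at hp1 hp2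
      have hx : p.1 - xs.blockStart k < (xs.getD k []).length := by omega
      have hy : p.2 - ys.blockStart k < (ys.getD k []).length := by omega
      refine ⟨hx, hy, ?_⟩
      rw [← List.getElem?_flatten_blockStart_add hx, ← List.getElem?_flatten_blockStart_add hy,
        Nat.add_sub_cancel' hp1.1, Nat.add_sub_cancel' hp2.1]
      exact (hM.1 p hpM).2.2
    · simp only [mem_image, forall_exists_index, and_imp]
      rintro _ p hp rfl _ q hq rfl
      obtain ⟨hpM, hp1, hp2⟩ := hmem p hp
      obtain ⟨hqM, hq1, hq2⟩ := hmem q hq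
      rw [List.mem_blockRange] at hp1 hp2 hq1 hq2
      have := hM.2 p hpM q hqM
      simp only [unshift]
      omega
  exact card_image_of_injOn hinj ▸ hmatch.card_le_maxMatch

theorem IsMatch.card_le_sum_maxMatch (hM : IsMatch xs.flatten ys.flatten M)
    (hcorr : ∀ p ∈ M, ∀ k, p.1 ∈ xs.blockRange k → p.2 ∈ ys.blockRange k) :
    M.card ≤ ∑ k ∈ range xs.length, maxMatch (xs.getD k []) (ys.getD k []) := by
  have hcover : M ⊆ (range xs.length).biUnion fun k => M.filter fun p => p.1 ∈ xs.blockRange k :=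
    fun p hp => by
      obtain ⟨k, hk, hpk⟩ := List.exists_mem_blockRange (hM.1 p hp).1
      exact mem_biUnion.2 ⟨k, mem_range.2 hk, mem_filter.2 ⟨hp, hpk⟩⟩
  calc M.card ≤ _ := card_le_card hcover
    _ ≤ _ := card_biUnion_le
    _ ≤ _ := sum_le_sum fun k _ => hM.card_filter_blockRange_le (fun p hp => hcorr p hp k)

def blockShift (xs ys : List (List α)) (k : ℕ) : ℕ × ℕ ↪ ℕ × ℕ :=
  (addRightEmbedding (xs.blockStart k)).prodMap (addRightEmbedding (ys.blockStart k))

@[simp]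
theorem blockShift_apply (xs ys : List (List α)) (k : ℕ) (p : ℕ × ℕ) :
    blockShift xs ys k p = (p.1 + xs.blockStart k, p.2 + ys.blockStart k) :=
  rfl

theorem IsMatch.mem_blockRange_of_mem_map_blockShift {k : ℕ} {N : Finset (ℕ × ℕ)}
    (hN : IsMatch (xs.getD k []) (ys.getD k []) N) {q : ℕ × ℕ}
    (hq : q ∈ N.map (blockShift xs ys k)) :
    q.1 ∈ xs.blockRange k ∧ q.2 ∈ ys.blockRange k := by
  obtain ⟨p, hp, rfl⟩ := Finset.mem_map.1 hq
  have := hN.1 p hp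
  simp only [blockShift_apply, List.mem_blockRange]
  omega

theorem isMatch_biUnion_map_blockShift (s : Finset ℕ) {N : ℕ → Finset (ℕ × ℕ)}
    (hN : ∀ k, IsMatch (xs.getD k []) (ys.getD k []) (N k)) :
    IsMatch xs.flatten ys.flatten (s.biUnion fun k => (N k).map (blockShift xs ys k)) := by
  have hmem : ∀ q ∈ s.biUnion fun k => (N k).map (blockShift xs ys k), ∃ k, ∃ p ∈ N k,
      q = blockShift xs ys k p ∧ q.1 ∈ xs.blockRange k ∧ q.2 ∈ ys.blockRange k := fun q hq => by
    obtain ⟨k, -, hqk⟩ := Finset.mem_biUnion.1 hq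
    obtain ⟨p, hp, rfl⟩ := Finset.mem_map.1 hqk
    exact ⟨k, p, hp, rfl, (hN k).mem_blockRange_of_mem_map_blockShift hqk⟩
  constructor
  · intro q hq
    obtain ⟨k, p, hp, rfl, hx, hy⟩ := hmem q hq
    obtain ⟨hp1, hp2, hpe⟩ := (hN k).1 p hp
    refine ⟨List.lt_length_flatten_of_mem_blockRange hx,
      List.lt_length_flatten_of_mem_blockRange hy, ?_⟩
    rw [blockShift_apply, add_comm p.1, add_comm p.2, List.getElem?_flatten_blockStart_add hp1,
      List.getElem?_flatten_blockStart_add hp2]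
    exact hpe
  · intro q hq q' hq'
    obtain ⟨k, p, hp, rfl, hx, hy⟩ := hmem q hq
    obtain ⟨l, p', hp', rfl, hx', hy'⟩ := hmem q' hq'
    rcases lt_trichotomy k l with h | rfl | h
    · exact iff_of_true (List.lt_of_mem_blockRange_of_lt h hx hx')
        (List.lt_of_mem_blockRange_of_lt h hy hy')
    · have := (hN k).2 p hp p' hp'
      simp only [blockShift_apply]
      omega
    · exact iff_of_false (List.lt_of_mem_blockRange_of_lt h hx' hx).not_gt
        (List.lt_of_mem_blockRange_of_lt h hy' hy).not_gt

theorem sum_maxMatch_le_maxMatch_flatten (s : Finset ℕ) :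
    ∑ k ∈ s, maxMatch (xs.getD k []) (ys.getD k []) ≤ maxMatch xs.flatten ys.flatten := by
  choose N hN hcard using fun k => exists_isMatch_card_eq_maxMatch (xs.getD k []) (ys.getD k [])
  have hdisj : (s : Set ℕ).PairwiseDisjoint fun k => (N k).map (blockShift xs ys k) :=
    fun k _ l _ hkl => Finset.disjoint_left.2 fun q hk hl =>
      Finset.disjoint_left.1 (List.disjoint_blockRange hkl)
        ((hN k).mem_blockRange_of_mem_map_blockShift hk).1
        ((hN l).mem_blockRange_of_mem_map_blockShift hl).1
  calc ∑ k ∈ s, maxMatch (xs.getD k []) (ys.getD k [])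
      = (s.biUnion fun k => (N k).map (blockShift xs ys k)).card := by
        rw [card_biUnion hdisj]
        simp only [card_map, hcard]
    _ ≤ _ := (isMatch_biUnion_map_blockShift s hN).card_le_maxMatch

theorem maxMatch_flatten_eq_sum (hM : IsMatch xs.flatten ys.flatten M)
    (hbest : ∀ M' : Finset (ℕ × ℕ), IsMatch xs.flatten ys.flatten M' → M'.card ≤ M.card)
    (hcorr : ∀ p ∈ M, ∀ k, p.1 ∈ xs.blockRange k → p.2 ∈ ys.blockRange k) :
    maxMatch xs.flatten ys.flatten =
      ∑ k ∈ range xs.length, maxMatch (xs.getD k []) (ys.getD k []) :=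
  le_antisymm (hM.maxMatch_eq_card hbest ▸ hM.card_le_sum_maxMatch hcorr)
    (sum_maxMatch_le_maxMatch_flatten _)

end

theorem fbar_substring_matching_general {α : Type*} (x y : List α) (hx : x ≠ [])
    (M : Finset (ℕ × ℕ)) (hM : IsMatch x y M)
    (hbest : ∀ M' : Finset (ℕ × ℕ), IsMatch x y M' → M'.card ≤ M.card)
    (xs ys : List (List α)) (hlen : xs.length = ys.length)
    (hxj : x = xs.flatten) (hyj : y = ys.flatten)
    (hcorr : ∀ p ∈ M, ∀ k : ℕ,
      ((xs.take k).flatten.length ≤ p.1 ∧ p.1 < (xs.take (k + 1)).flatten.length) ↔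
      ((ys.take k).flatten.length ≤ p.2 ∧ p.2 < (ys.take (k + 1)).flatten.length)) :
    fbar x y = ∑ k ∈ Finset.range xs.length,
      fbar (xs.getD k []) (ys.getD k []) *
        (((xs.getD k []).length : ℝ) + ((ys.getD k []).length : ℝ)) /
          ((x.length : ℝ) + (y.length : ℝ)) := by
  subst hxj hyj
  have hmax := maxMatch_flatten_eq_sum hM hbest fun p hp k => by
    simp only [List.blockRange, Finset.mem_Ico]
    exact (hcorr p hp k).1
  have hpos : ((xs.flatten.length : ℝ) + ys.flatten.length) ≠ 0 := by
    have := List.length_pos_iff.2 hx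
    positivity
  rw [← Finset.sum_div, eq_div_iff hpos, fbar_mul_length_add, hmax]
  simp only [fbar_mul_length_add]
  rw [List.length_flatten_eq_sum_range xs, List.length_flatten_eq_sum_range ys, ← hlen]
  push_cast
  rw [Finset.sum_sub_distrib, Finset.sum_add_distrib, Finset.mul_sum]

/-- If `x = x₁⋯xₙ` and `y = y₁⋯yₙ` are decompositions into corresponding substrings
under a best possible `f̄`-match, then `f̄(x,y) = Σᵢ f̄(xᵢ,yᵢ)·vᵢ` with
`vᵢ = (|xᵢ|+|yᵢ|)/(|x|+|y|)` (terms with `|xᵢ|+|yᵢ| = 0` contribute `0`). -/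
theorem fbar_substring_matching {α : Type*} (x y : List α) (hx : x ≠ []) (hy : y ≠ [])
    (M : Finset (ℕ × ℕ)) (hM : IsMatch x y M)
    (hbest : ∀ M' : Finset (ℕ × ℕ), IsMatch x y M' → M'.card ≤ M.card)
    (xs ys : List (List α)) (hlen : xs.length = ys.length)
    (hxj : x = xs.flatten) (hyj : y = ys.flatten)
    (hcorr : ∀ p ∈ M, ∀ k : ℕ,
      ((xs.take k).flatten.length ≤ p.1 ∧ p.1 < (xs.take (k + 1)).flatten.length) ↔
      ((ys.take k).flatten.length ≤ p.2 ∧ p.2 < (ys.take (k + 1)).flatten.length)) :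
    fbar x y = ∑ k ∈ Finset.range xs.length,
      fbar (xs.getD k []) (ys.getD k []) *
        (((xs.getD k []).length : ℝ) + ((ys.getD k []).length : ℝ)) /
          ((x.length : ℝ) + (y.length : ℝ)) :=
  fbar_substring_matching_general x y hx M hM hbest xs ys hlen hxj hyj hcorr
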